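/- Let σ > 0, a ∈ ℝ, let x0 : ℕ → ℝ be a fixed real sequence, let (W_i)_{i∈ℕ} be i.i.d. centered Gaussian random variables of variance σ², and set Y_i = x0_i + W_i. Let h : ℕ → (0,∞) satisfy h(P) → 0 as P → ∞, and define A_h(t,a) = (√(σ² + h²)/h)·exp(−(t − a)²/(2h²)). Then (1/P)·(Σ_{i=1}^P E[A_{h(P)}(Y_i,a)] − Σ_{i=1}^P exp(−(x0_i − a)²/(2σ²))) → 0 as P → ∞. -/

import Mathlib

open MeasureTheory ProbabilityTheory Filter Real

/-- The scaled Gaussian kernel `A_h(t,a) = (√(σ²+h²)/h)·exp(−(t−a)²/(2h²))`. -/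
noncomputable def kernelA (σ h t a : ℝ) : ℝ :=
  Real.sqrt (σ ^ 2 + h ^ 2) / h * Real.exp (-(t - a) ^ 2 / (2 * h ^ 2))

/-! Completing the square in the Gaussian integral gives, for `W ~ N(0, σ²)`, the exact value
`E[A_h(x + W, a)] = exp(−(x − a)²/(2(σ² + h²)))`: the prefactor `√(σ² + h²)/h` of `A_h` is
precisely the normalisation that makes this hold. Since `exp(−u/(s + t)) − exp(−u/s)` is bounded
by `t/s` uniformly in `u ≥ 0`, every summand is within `h(P)²/σ²` of its limit, and so is the
average. -/

lemma integral_exp_neg_sq_div_gaussianReal (m c : ℝ) {v : NNReal} (hv : v ≠ 0) {q : ℝ}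
    (hq : 0 < q) :
    ∫ x, exp (-(x - c) ^ 2 / (2 * q)) ∂gaussianReal m v =
      √(q / (v + q)) * exp (-(m - c) ^ 2 / (2 * (v + q))) := by
  have hv' : (0 : ℝ) < v := by positivity
  set b := (v + q) / (2 * v * q)
  have complete_square : ∀ x, gaussianPDFReal m v x • exp (-(x - c) ^ 2 / (2 * q)) =
      ((√(2 * π * v))⁻¹ * exp (-(m - c) ^ 2 / (2 * (v + q)))) *
        exp (-b * (x - (q * m + v * c) / (v + q)) ^ 2) := by
    intro x
    simp only [gaussianPDFReal, smul_eq_mul, mul_assoc, ← exp_add]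
    congr 2
    simp only [b]
    field_simp
    ring
  rw [integral_gaussianReal_eq_integral_smul hv]
  simp_rw [complete_square]
  rw [integral_const_mul, integral_sub_right_eq_self (fun x => exp (-b * x ^ 2)),
    integral_gaussian, mul_right_comm, ← sqrt_inv, ← sqrt_mul (by positivity)]
  congr 2
  simp only [b]
  field_simp

lemma integral_kernelA_gaussianReal (x a : ℝ) {σ h : ℝ} {v : NNReal}
    (hσv : (v : ℝ) = σ ^ 2) (hσ : σ ≠ 0) (hh : 0 < h) :
    ∫ w, kernelA σ h (x + w) a ∂gaussianReal 0 v =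
      exp (-(x - a) ^ 2 / (2 * (σ ^ 2 + h ^ 2))) := by
  have hv : v ≠ 0 := by
    rw [← NNReal.coe_ne_zero, hσv]
    positivity
  have hshift : ∀ w, kernelA σ h (x + w) a =
      √(σ ^ 2 + h ^ 2) / h * exp (-(w - (a - x)) ^ 2 / (2 * h ^ 2)) := by
    intro w
    rw [kernelA]
    ring_nf
  simp_rw [hshift]
  rw [integral_const_mul, integral_exp_neg_sq_div_gaussianReal _ _ hv (by positivity),
    hσv, ← mul_assoc, zero_sub, neg_sub, sqrt_div (sq_nonneg h), sqrt_sq hh.le]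
  have hS : 0 < √(σ ^ 2 + h ^ 2) := by positivity
  field_simp

lemma integral_kernelA_of_map_eq_gaussianReal {Ω : Type*} [MeasurableSpace Ω] {μ : Measure Ω}
    {X : Ω → ℝ} (x a : ℝ) {σ h : ℝ} {v : NNReal} (hX : μ.map X = gaussianReal 0 v)
    (hσv : (v : ℝ) = σ ^ 2) (hσ : σ ≠ 0) (hh : 0 < h) :
    ∫ ω, kernelA σ h (x + X ω) a ∂μ = exp (-(x - a) ^ 2 / (2 * (σ ^ 2 + h ^ 2))) := by
  have hXm : AEMeasurable X μ := .of_map_ne_zero (hX ▸ IsProbabilityMeasure.ne_zero _)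
  have hA : Continuous fun w => kernelA σ h (x + w) a := by
    unfold kernelA
    fun_prop
  rw [← integral_map hXm hA.aestronglyMeasurable, hX]
  exact integral_kernelA_gaussianReal x a hσv hσ hh

lemma abs_exp_neg_div_add_sub_exp_neg_div_le {s t u : ℝ} (hs : 0 < s) (ht : 0 ≤ t)
    (hu : 0 ≤ u) : |exp (-u / (s + t)) - exp (-u / s)| ≤ t / s := by
  set A := u / (s + t)
  set δ := A * t / s
  have hδ : 0 ≤ δ := by positivity
  have hsplit : -u / s = -A + -δ := by
    simp only [A, δ]
    field_simp
    ring
  have hdiff : exp (-u / (s + t)) - exp (-u / s) = exp (-A) * (1 - exp (-δ)) := by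
    rw [hsplit, exp_add, neg_div]
    ring
  have hδ' : 0 ≤ 1 - exp (-δ) := sub_nonneg.mpr (exp_le_one_iff.mpr (neg_nonpos.mpr hδ))
  rw [hdiff, abs_of_nonneg (mul_nonneg (exp_pos _).le hδ')]
  calc exp (-A) * (1 - exp (-δ)) ≤ exp (-A) * δ := by
        gcongr
        linarith [one_sub_le_exp_neg δ]
    _ = A * exp (-A) * (t / s) := by ring
    _ ≤ 1 * (t / s) := by
        gcongr
        exact (mul_exp_neg_le_exp_neg_one A).trans (exp_le_one_iff.mpr (by norm_num))
    _ = t / s := one_mul _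

lemma tendsto_one_div_mul_sum_range_of_abs_le {f : ℕ → ℕ → ℝ} {ε : ℕ → ℝ}
    (hf : ∀ P, ∀ i < P, |f P i| ≤ ε P) (hε : Tendsto ε atTop (nhds 0)) :
    Tendsto (fun P : ℕ => (1 / (P : ℝ)) * ∑ i ∈ Finset.range P, f P i) atTop (nhds 0) := by
  refine squeeze_zero_norm' ?_ hε
  filter_upwards [eventually_gt_atTop 0] with P hP
  have hP' : (0 : ℝ) < P := by exact_mod_cast hP
  calc ‖(1 / (P : ℝ)) * ∑ i ∈ Finset.range P, f P i‖
      ≤ (1 / (P : ℝ)) * ∑ i ∈ Finset.range P, |f P i| := by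
        rw [norm_mul, Real.norm_of_nonneg (by positivity)]
        gcongr
        exact Finset.abs_sum_le_sum_abs _ _
    _ ≤ (1 / (P : ℝ)) * ∑ i ∈ Finset.range P, ε P := by
        gcongr with i hi
        exact hf P i (Finset.mem_range.mp hi)
    _ = ε P := by
        rw [Finset.sum_const, Finset.card_range, nsmul_eq_mul]
        field_simp

theorem kernel_expectation_average_limit_general
    {Ω : Type*} [MeasurableSpace Ω] (μpr : Measure Ω)
    (σ a : ℝ) (hσ : 0 < σ)
    (x0 : ℕ → ℝ) (W : ℕ → Ω → ℝ)
    (hdist : ∀ i, Measure.map (W i) μpr = gaussianReal 0 ⟨σ ^ 2, sq_nonneg σ⟩)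
    (h : ℕ → ℝ) (hpos : ∀ P, 0 < h P)
    (hh0 : Tendsto h atTop (nhds 0)) :
    Tendsto
      (fun P : ℕ => (1 / (P : ℝ)) *
        ((∑ i ∈ Finset.range P, ∫ ω, kernelA σ (h P) (x0 i + W i ω) a ∂μpr) -
          ∑ i ∈ Finset.range P, Real.exp (-(x0 i - a) ^ 2 / (2 * σ ^ 2))))
      atTop (nhds 0) := by
  have hexp : ∀ P i, ∫ ω, kernelA σ (h P) (x0 i + W i ω) a ∂μpr =
      exp (-(x0 i - a) ^ 2 / (2 * (σ ^ 2 + h P ^ 2))) := fun P i =>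
    integral_kernelA_of_map_eq_gaussianReal _ _ (hdist i) rfl hσ.ne' (hpos P)
  simp_rw [hexp, ← Finset.sum_sub_distrib]
  refine tendsto_one_div_mul_sum_range_of_abs_le (ε := fun P => 2 * h P ^ 2 / (2 * σ ^ 2))
    (fun P i _ => ?_) ?_
  · rw [mul_add]
    exact abs_exp_neg_div_add_sub_exp_neg_div_le (by positivity) (by positivity) (by positivity)
  · simpa using ((hh0.pow 2).const_mul 2).div_const (2 * σ ^ 2)

/-- the averaged expectations of the scaled Gaussian kernel converge to those of
the limiting Gaussian: `(1/P)(∑_{i<P} E[A_{h(P)}(Y_i,a)] − ∑_{i<P} exp(−(x0_i−a)²/(2σ²))) → 0`. -/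
theorem kernel_expectation_average_limit
    {Ω : Type*} [MeasurableSpace Ω] (μpr : Measure Ω) [IsProbabilityMeasure μpr]
    (σ a : ℝ) (hσ : 0 < σ)
    (x0 : ℕ → ℝ) (W : ℕ → Ω → ℝ)
    (hmeas : ∀ i, Measurable (W i))
    (hindep : iIndepFun W μpr)
    (hdist : ∀ i, Measure.map (W i) μpr = gaussianReal 0 ⟨σ ^ 2, sq_nonneg σ⟩)
    (h : ℕ → ℝ) (hpos : ∀ P, 0 < h P)
    (hh0 : Tendsto h atTop (nhds 0)) :
    Tendsto
      (fun P : ℕ => (1 / (P : ℝ)) *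
        ((∑ i ∈ Finset.range P, ∫ ω, kernelA σ (h P) (x0 i + W i ω) a ∂μpr) -
          ∑ i ∈ Finset.range P, Real.exp (-(x0 i - a) ^ 2 / (2 * σ ^ 2))))
      atTop (nhds 0) :=
  kernel_expectation_average_limit_general μpr σ a hσ x0 W hdist h hpos hh0
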